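/- arXiv:2403.13359 — 2 statements merged into one kernel-verified Lean document; each statement's English description precedes it below -/
import Mathlib

section
/- For every integer N ≡ 3 (mod 8) and every integer t ≥ 3, the number of triples (x₁, x₂, x₃) in (ℤ/2^t ℤ)³ with x₁² + x₂² + x₃² ≡ N (mod 2^t) is exactly 4^t. -/
/-!
Every solution has odd coordinates, since `3` is a sum of three squares modulo `8` only as
`1 + 1 + 1`. For odd `x₁, x₂` the remaining equation `x₃² = N - x₁² - x₂²` has a right-hand side
`≡ 1 (mod 8)`, so it suffices to show that every `c ≡ 1 (mod 8)` has exactly four square roots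
modulo `2ᵗ`; the count is then `4 · (2ᵗ⁻¹)² = 4ᵗ`.

For the square roots, consider squaring on the unit group `(ℤ/2ᵗ)ˣ` of order `2ᵗ⁻¹`. Its image
lies in the kernel of reduction modulo `8`, which has order `2ᵗ⁻³`, and it contains the cyclic
group generated by `25 = 5²`, which has the same order because `5` has order `2ᵗ⁻²`. So the
squares are exactly the units `≡ 1 (mod 8)`, and each of them has `2ᵗ⁻¹ / 2ᵗ⁻³ = 4` square roots.
-/

open ZMod

theorem Fintype.sum_eq_sum_units {R M : Type*} [Monoid R] [Fintype R] [Fintype Rˣ]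
    [AddCommMonoid M] (f : R → M) (hf : ∀ x, ¬IsUnit x → f x = 0) :
    ∑ x, f x = ∑ u : Rˣ, f u :=
  (Fintype.sum_of_injective _ Units.val_injective _ f
    (fun x hx ↦ hf x fun ⟨u, hu⟩ ↦ hx ⟨u, hu⟩) fun _ ↦ rfl).symm

theorem Nat.card_subtype_prod_prod_eq_sum {R : Type*} [Fintype R] (P : R → R → R → Prop) :
    Nat.card {x : R × R × R // P x.1 x.2.1 x.2.2} = ∑ a, ∑ b, Nat.card {c // P a b c} := by
  rw [Nat.card_congr (Equiv.subtypeProdEquivSigmaSubtype fun a (y : R × R) ↦ P a y.1 y.2),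
    Nat.card_sigma]
  refine Finset.sum_congr rfl fun a _ ↦ ?_
  rw [Nat.card_congr (Equiv.subtypeProdEquivSigmaSubtype (P a)), Nat.card_sigma]

namespace ZMod

theorem card_units_two_pow_succ (k : ℕ) : Nat.card (ZMod (2 ^ (k + 1)))ˣ = 2 ^ k := by
  rw [Nat.card_eq_fintype_card, card_units_eq_totient, Nat.totient_prime_pow_succ Nat.prime_two,
    Nat.add_one_sub_one, mul_one]

theorem isUnit_of_isUnit_castHom {p j k : ℕ} (hp : p.Prime) (hj : 0 < j) (hjk : j ≤ k)
    {x : ZMod (p ^ k)} (hx : IsUnit (castHom (pow_dvd_pow p hjk) (ZMod (p ^ j)) x)) :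
    IsUnit x := by
  have : NeZero (p ^ k) := ⟨pow_ne_zero k hp.ne_zero⟩
  obtain ⟨v, rfl⟩ := natCast_zmod_surjective x
  rw [map_natCast, isUnit_natCast_iff_not_dvd_pow hp hj] at hx
  rwa [isUnit_natCast_iff_not_dvd_pow hp (hj.trans_le hjk)]

theorem sq_eq_one_of_unit_eight (u : (ZMod (2 ^ 3))ˣ) : u ^ 2 = 1 := by
  have key : ∀ a b : ZMod (2 ^ 3), a * b = 1 → a ^ 2 = 1 := by decide
  exact Units.ext (by simpa using key _ _ u.mul_inv)

section TwoPow

variable (n : ℕ)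

local notation "R" => ZMod (2 ^ (n + 3))

local notation "ρ₈" => castHom (pow_dvd_pow 2 (Nat.le_add_left 3 n)) (ZMod (2 ^ 3))

local notation "υ₈" => unitsMap (pow_dvd_pow 2 (Nat.le_add_left 3 n))

theorem card_ker_unitsMap_eight : Nat.card (υ₈ : Rˣ →* _).ker = 2 ^ n := by
  have h := (υ₈ : Rˣ →* _).ker.card_mul_index
  rw [Subgroup.index_ker, MonoidHom.range_eq_top.mpr (unitsMap_surjective _), Subgroup.card_top,
    card_units_two_pow_succ, card_units_two_pow_succ,
    show 2 ^ (n + 2) = 2 ^ n * 4 by ring] at h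
  omega

theorem range_powMonoidHom_two_eq_ker_unitsMap_eight :
    (powMonoidHom 2 : Rˣ →* Rˣ).range = (υ₈ : Rˣ →* _).ker := by
  refine Subgroup.eq_of_le_of_card_ge ?_ ?_
  · rintro _ ⟨u, rfl⟩
    rw [MonoidHom.mem_ker, powMonoidHom_apply, map_pow, sq_eq_one_of_unit_eight]
  · let five : Rˣ := unitOfCoprime 5 (Nat.Coprime.pow_right _ (by norm_num))
    have h5 : orderOf five = 2 ^ (n + 1) := by
      rw [← orderOf_units, coe_unitOfCoprime, Nat.cast_ofNat]
      exact orderOf_five (n + 1)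
    have h25 : orderOf (five ^ 2) = 2 ^ n := by
      rw [orderOf_pow_of_dvd two_ne_zero (h5 ▸ dvd_pow_self 2 n.succ_ne_zero), h5, pow_succ,
        Nat.mul_div_cancel _ two_pos]
    calc Nat.card (υ₈ : Rˣ →* _).ker = orderOf (five ^ 2) := by
          rw [h25, card_ker_unitsMap_eight]
      _ = Nat.card (Subgroup.zpowers (five ^ 2)) := (Nat.card_zpowers _).symm
      _ ≤ Nat.card (powMonoidHom 2 : Rˣ →* Rˣ).range :=
          Subgroup.card_le_of_le (Subgroup.zpowers_le.mpr ⟨five, rfl⟩)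

theorem card_ker_powMonoidHom_two : Nat.card (powMonoidHom 2 : Rˣ →* Rˣ).ker = 4 := by
  have h := (powMonoidHom 2 : Rˣ →* Rˣ).ker.card_mul_index
  rw [Subgroup.index_ker, range_powMonoidHom_two_eq_ker_unitsMap_eight, card_ker_unitsMap_eight,
    card_units_two_pow_succ, show 2 ^ (n + 2) = 4 * 2 ^ n by ring] at h
  simpa using h

theorem card_sq_eq_of_mem_ker_unitsMap_eight {a : Rˣ} (ha : a ∈ (υ₈ : Rˣ →* _).ker) :
    Nat.card {u : Rˣ // u ^ 2 = a} = 4 := by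
  rw [← range_powMonoidHom_two_eq_ker_unitsMap_eight] at ha
  obtain ⟨v, rfl⟩ := ha
  rw [← card_ker_powMonoidHom_two n]
  exact Nat.card_congr ((powMonoidHom 2).fiberEquivKer v)

theorem card_sq_eq_of_castHom_eq_one {c : R} (hc : ρ₈ c = 1) :
    Nat.card {x : R // x ^ 2 = c} = 4 := by
  obtain ⟨a, rfl⟩ : IsUnit c :=
    isUnit_of_isUnit_castHom Nat.prime_two three_pos (Nat.le_add_left 3 n) (hc ▸ isUnit_one)
  have ha : a ∈ (υ₈ : Rˣ →* _).ker := Units.ext (by rwa [unitsMap_val, ← castHom_apply])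
  rw [← card_sq_eq_of_mem_ker_unitsMap_eight n ha]
  refine (Nat.card_eq_of_bijective (fun u ↦ ⟨(u.1 : R), by rw [← Units.val_pow_eq_pow_val, u.2]⟩)
    ⟨fun u v huv ↦ Subtype.ext (Units.ext (congrArg Subtype.val huv)), fun x ↦ ?_⟩).symm
  obtain ⟨w, hw⟩ := (isUnit_pow_iff two_ne_zero).mp (x.2 ▸ a.isUnit)
  exact ⟨⟨w, Units.ext (by rw [Units.val_pow_eq_pow_val, hw, x.2])⟩, Subtype.ext hw⟩

theorem isUnit_of_sq_add_sq_add_sq_eq {N : ℤ} (hN : (N : ZMod (2 ^ 3)) = 3) {a b c : R}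
    (h : a ^ 2 + b ^ 2 + c ^ 2 = N) : IsUnit a := by
  have key : ∀ a b c : ZMod (2 ^ 3), a ^ 2 + b ^ 2 + c ^ 2 = 3 → a ^ 2 = 1 := by decide
  refine isUnit_of_isUnit_castHom Nat.prime_two three_pos (Nat.le_add_left 3 n)
    (IsUnit.of_pow_eq_one (key _ (ρ₈ b) (ρ₈ c) ?_) two_ne_zero)
  rw [← hN, ← map_intCast ρ₈, ← h, map_add, map_add, map_pow, map_pow, map_pow]

theorem card_sq_add_sq_add_sq_eq_of_not_isUnit {N : ℤ} (hN : (N : ZMod (2 ^ 3)) = 3) {a b : R}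
    (hab : ¬(IsUnit a ∧ IsUnit b)) : Nat.card {c : R // a ^ 2 + b ^ 2 + c ^ 2 = N} = 0 := by
  refine Nat.card_eq_zero.mpr (Or.inl ⟨fun ⟨c, hc⟩ ↦ hab ⟨?_, ?_⟩⟩)
  · exact isUnit_of_sq_add_sq_add_sq_eq n hN hc
  · exact isUnit_of_sq_add_sq_add_sq_eq n hN (a := b) (b := a) (by rwa [add_comm (b ^ 2)])

theorem card_sq_add_sq_add_sq_eq_of_units {N : ℤ} (hN : (N : ZMod (2 ^ 3)) = 3) (u v : Rˣ) :
    Nat.card {c : R // (u : R) ^ 2 + (v : R) ^ 2 + c ^ 2 = N} = 4 := by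
  have hsq (w : Rˣ) : ρ₈ w ^ 2 = 1 := by
    have : ρ₈ w = (υ₈ w : ZMod (2 ^ 3)) := by rw [unitsMap_val]; rfl
    rw [this, ← Units.val_pow_eq_pow_val, sq_eq_one_of_unit_eight, Units.val_one]
  have hc : ρ₈ (N - (u : R) ^ 2 - (v : R) ^ 2) = 1 := by
    rw [map_sub, map_sub, map_intCast, hN, map_pow, map_pow, hsq, hsq]
    decide
  rw [← card_sq_eq_of_castHom_eq_one n hc]
  exact Nat.card_congr (Equiv.subtypeEquivRight fun c ↦ by
    constructor <;> intro h <;> linear_combination h)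

end TwoPow

end ZMod

theorem three_squares_count_mod_two_pow (N : ℤ) (hN : N % 8 = 3) (t : ℕ) (ht : 3 ≤ t) :
    Nat.card {x : ZMod (2 ^ t) × ZMod (2 ^ t) × ZMod (2 ^ t) //
      x.1 ^ 2 + x.2.1 ^ 2 + x.2.2 ^ 2 = (N : ZMod (2 ^ t))} = 4 ^ t := by
  obtain ⟨n, rfl⟩ : ∃ n, t = n + 3 := ⟨t - 3, by omega⟩
  have hN8 : (N : ZMod (2 ^ 3)) = 3 := by
    rw [← intCast_mod N (2 ^ 3)]
    push_cast
    rw [hN]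
    rfl
  have inner (u : (ZMod (2 ^ (n + 3)))ˣ) :
      ∑ b, Nat.card {c // (u : ZMod (2 ^ (n + 3))) ^ 2 + b ^ 2 + c ^ 2 = N} = 2 ^ (n + 2) * 4 := by
    rw [Fintype.sum_eq_sum_units _ fun b _ ↦ card_sq_add_sq_add_sq_eq_of_not_isUnit n hN8 (by tauto)]
    simp only [card_sq_add_sq_add_sq_eq_of_units n hN8, Finset.sum_const, Finset.card_univ, smul_eq_mul,
      ← Nat.card_eq_fintype_card, card_units_two_pow_succ]
  rw [Nat.card_subtype_prod_prod_eq_sum fun a b c : ZMod (2 ^ (n + 3)) ↦ a ^ 2 + b ^ 2 + c ^ 2 = N,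
    Fintype.sum_eq_sum_units _ fun a _ ↦ Finset.sum_eq_zero fun b _ ↦
      card_sq_add_sq_add_sq_eq_of_not_isUnit n hN8 (by tauto)]
  simp only [inner, Finset.sum_const, Finset.card_univ, smul_eq_mul, ← Nat.card_eq_fintype_card,
    card_units_two_pow_succ]
  rw [show (4 : ℕ) ^ (n + 3) = 2 ^ (2 * (n + 3)) by rw [pow_mul]; rfl]
  ring
end

section
/- Let Q ∈ ℤ[x₁, ..., x_n] be homogeneous of degree d ≥ 1, not identically zero modulo any prime. Then for all primes p and integers e ≥ 1, p^{-en} · #{x ∈ (ℤ/p^eℤ)ⁿ : Q(x) ≡ 0 (mod p^e)} ≪ p^{-e/d}, with implied constant depending only on Q. -/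
/-!
Choose `b ∈ ℤⁿ` with `N := Q(b) ≠ 0` and let `v = v_p(N)`. By homogeneity, `Q` restricted to a
line `t ↦ a + t • b` is a polynomial of degree `d` in `t` with leading coefficient `N`. Splitting
off one root `t₀` at a time, `f(t) - f(t₀) = (t - t₀) g(t)`, shows that its roots modulo `p^e` lie
in at most `d` classes modulo `p^s` as soon as `v + s d < e + d`; so every such line carries at
most `d p^(e-s)` zeros. Averaging over the parallel lines bounds the density of zeros by
`d p^(-s)`, and for `s = ⌈(e - v) / d⌉` this is at most `d p^v p^(-e/d) ≤ d |N| p^(-e/d)`.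
-/

open Finset

theorem Prime.pow_sub_dvd_of_pow_dvd_mul {α : Type*} [CommMonoidWithZero α] [IsCancelMulZero α]
    {π a b : α} (hπ : Prime π) {v e : ℕ} (ha : ¬ π ^ (v + 1) ∣ a) (hab : π ^ e ∣ a * b) :
    π ^ (e - v) ∣ b := by
  rw [← emultiplicity_lt_iff_not_dvd, Nat.cast_add_one, ENat.lt_add_one_iff (by simp)] at ha
  rw [pow_dvd_iff_le_emultiplicity, emultiplicity_mul hπ] at hab
  rw [pow_dvd_iff_le_emultiplicity, ENat.natCast_sub, tsub_le_iff_left]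
  exact hab.trans (add_le_add_left ha _)

namespace Polynomial

theorem eval_sub_eval_eq_mul_eval_divByMonic {R : Type*} [CommRing R] (f : R[X]) (t₀ t : R) :
    f.eval t - f.eval t₀ = (t - t₀) * (f /ₘ (X - C t₀)).eval t := by
  conv_lhs => rw [← modByMonic_add_div f (X - C t₀), modByMonic_X_sub_C_eq_C_eval]
  simp only [eval_add, eval_C, eval_mul, eval_sub, eval_X]
  ring

theorem exists_cover_of_pow_dvd_eval {R : Type*} [CommRing R] [IsDomain R] {π : R}
    (hπ : Prime π) {f : R[X]} {v e s : ℕ} (hlc : ¬ π ^ (v + 1) ∣ f.leadingCoeff)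
    (hvse : v + s * f.natDegree < e + f.natDegree) :
    ∃ T : Finset R, #T ≤ f.natDegree ∧ ∀ t, π ^ e ∣ f.eval t → ∃ t₀ ∈ T, π ^ s ∣ t - t₀ := by
  classical
  obtain ⟨d, hd⟩ : ∃ d, f.natDegree = d := ⟨_, rfl⟩
  rw [hd] at hvse ⊢
  induction d generalizing f e with
  | zero =>
    refine ⟨∅, le_rfl, fun t ht => absurd ?_ hlc⟩
    rw [eq_C_of_natDegree_eq_zero hd, eval_C] at ht
    rw [leadingCoeff, hd]
    exact (pow_dvd_pow π (by omega)).trans ht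
  | succ d ih =>
    by_cases hroot : ∃ t₀, π ^ e ∣ f.eval t₀
    swap
    · exact ⟨∅, by simp, fun t ht => absurd ⟨t, ht⟩ hroot⟩
    obtain ⟨t₀, ht₀⟩ := hroot
    rcases Nat.eq_zero_or_pos s with rfl | hs
    · exact ⟨{t₀}, by simp, fun t _ => ⟨t₀, mem_singleton_self _, by simp⟩⟩
    set g := f /ₘ (X - C t₀)
    have hg : g.natDegree = d := by
      rw [natDegree_divByMonic _ (monic_X_sub_C t₀), hd, natDegree_X_sub_C, Nat.add_sub_cancel]
    have hglc : g.leadingCoeff = f.leadingCoeff := leadingCoeff_divByMonic_X_sub_C f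
      (fun h => by simp [natDegree_eq_of_degree_eq_some h] at hd) t₀
    -- if `π ^ s ∤ t - t₀`, then `t - t₀` absorbs at most `s - 1` factors `π` of `(t - t₀) * g(t)`
    obtain ⟨T, hTcard, hT⟩ :=
      ih (e := e - (s - 1)) (hglc ▸ hlc) (by rw [Nat.mul_succ] at hvse; omega) hg
    refine ⟨insert t₀ T, (card_insert_le _ _).trans (by omega), fun t ht => ?_⟩
    by_cases hst : π ^ s ∣ t - t₀
    · exact ⟨t₀, mem_insert_self _ _, hst⟩
    have hdvd : π ^ e ∣ (t - t₀) * g.eval t :=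
      eval_sub_eval_eq_mul_eval_divByMonic f t₀ t ▸ dvd_sub ht ht₀
    obtain ⟨t₁, ht₁, hst₁⟩ :=
      hT t (hπ.pow_sub_dvd_of_pow_dvd_mul (by rwa [Nat.sub_add_cancel hs]) hdvd)
    exact ⟨t₁, mem_insert_of_mem ht₁, hst₁⟩

theorem coeff_prod_sum_of_natDegree_le {R ι : Type*} [CommSemiring R] (s : Finset ι)
    (f : ι → R[X]) (k : ι → ℕ) (h : ∀ i ∈ s, (f i).natDegree ≤ k i) :
    (∏ i ∈ s, f i).coeff (∑ i ∈ s, k i) = ∏ i ∈ s, (f i).coeff (k i) := by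
  classical
  induction s using Finset.induction_on with
  | empty => simp
  | insert a s ha ih =>
    simp only [forall_mem_insert] at h
    rw [prod_insert ha, sum_insert ha, prod_insert ha,
      coeff_mul_add_eq_of_natDegree_le h.1 ((natDegree_prod_le _ _).trans (sum_le_sum h.2)),
      ih h.2]

section FinsuppProd

variable {R σ : Type*} [CommSemiring R] {ℓ : σ → R[X]}

theorem natDegree_finsuppProd_pow_le (hℓ : ∀ i, (ℓ i).natDegree ≤ 1) (m : σ →₀ ℕ) :
    (m.prod fun i k => ℓ i ^ k).natDegree ≤ ∑ i ∈ m.support, m i :=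
  (natDegree_prod_le _ _).trans <| sum_le_sum fun i _ =>
    (natDegree_pow_le_of_le _ (hℓ i)).trans (mul_one _).le

theorem coeff_finsuppProd_pow_degree (hℓ : ∀ i, (ℓ i).natDegree ≤ 1) (m : σ →₀ ℕ) :
    (m.prod fun i k => ℓ i ^ k).coeff (∑ i ∈ m.support, m i) =
      m.prod fun i k => (ℓ i).coeff 1 ^ k := by
  rw [Finsupp.prod, coeff_prod_sum_of_natDegree_le _ _ _
    fun i _ => (natDegree_pow_le_of_le _ (hℓ i)).trans (mul_one _).le]
  refine prod_congr rfl fun i _ => ?_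
  show _ = (ℓ i).coeff 1 ^ m i
  rw [← coeff_pow_of_natDegree_le (hℓ i), mul_one]

end FinsuppProd

end Polynomial

theorem ZMod.card_filter_castHom_mem_mul {m N : ℕ} [NeZero m] [NeZero N] (h : m ∣ N)
    (T : Finset (ZMod m)) : #{t : ZMod N | castHom h (ZMod m) t ∈ T} * m = #T * N := by
  classical
  have hfib (y : ZMod m) : #{t | castHom h (ZMod m) t = y} = #{t | castHom h (ZMod m) t = 0} :=
    AddMonoidHom.card_fiber_eq_of_mem_range _ (castHom_surjective h y) (castHom_surjective h 0)
  have htotal : Fintype.card (ZMod N) = #{t | castHom h (ZMod m) t = 0} * m := by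
    rw [← card_univ, card_eq_sum_card_fiberwise (f := castHom h (ZMod m)) (t := univ)
      fun _ _ => mem_univ _, sum_congr rfl fun y _ => hfib y, sum_const, card_univ, ZMod.card,
      smul_eq_mul, mul_comm]
  rw [ZMod.card] at htotal
  rw [← sum_card_fiberwise_eq_card_filter, sum_congr rfl fun y _ => hfib y, sum_const,
    smul_eq_mul, mul_assoc, ← htotal]

theorem Fintype.sum_card_subtype_add_eq {M R : Type*} [AddCommGroup M] [Fintype M] [Fintype R]
    (P : M → Prop) (φ : R → M) :
    ∑ a, Nat.card {t // P (a + φ t)} = Fintype.card R * Nat.card {x // P x} := by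
  classical
  simp only [Nat.card_eq_fintype_card, Fintype.card_subtype, card_filter]
  rw [sum_comm, ← card_univ, ← smul_eq_mul, ← sum_const]
  exact Finset.sum_congr rfl fun t _ => Fintype.sum_equiv (Equiv.addRight (φ t)) _ _ fun _ => rfl

theorem Nat.exists_le_mul_add_and_add_mul_lt {d e v : ℕ} (hd : 0 < d) (hve : v < e) :
    ∃ s, e ≤ d * (v + s) ∧ v + s * d < e + d ∧ s ≤ e := by
  obtain ⟨w, rfl⟩ := Nat.exists_eq_add_of_lt hve
  -- `(w + d) / d = ⌈(e - v) / d⌉`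
  refine ⟨(w + d) / d, ?_⟩
  have hs := Nat.div_add_mod (w + d) d
  have hr := Nat.mod_lt (w + d) hd
  generalize (w + d) / d = s at hs ⊢
  generalize (w + d) % d = r at hs hr
  exact ⟨by nlinarith, by nlinarith, by nlinarith⟩

namespace MvPolynomial

section RestrictLine

variable {σ R : Type*} [CommRing R]

noncomputable def restrictLine (Q : MvPolynomial σ R) (a b : σ → R) : Polynomial R :=
  aeval (fun i => Polynomial.C (b i) * Polynomial.X + Polynomial.C (a i)) Q

theorem eval_restrictLine (Q : MvPolynomial σ R) (a b : σ → R) (t : R) :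
    (Q.restrictLine a b).eval t = eval (a + t • b) Q := by
  rw [restrictLine, ← Polynomial.coe_aeval_eq_eval, ← AlgHom.comp_apply, comp_aeval,
    aeval_eq_eval]
  congr 2 with i
  simp only [Polynomial.aeval_add, Polynomial.aeval_C, Polynomial.aeval_mul, Polynomial.aeval_X,
    Algebra.algebraMap_self, RingHom.id_apply, Pi.add_apply, Pi.smul_apply, smul_eq_mul]
  ring

theorem restrictLine_eq_sum (Q : MvPolynomial σ R) (a b : σ → R) :
    Q.restrictLine a b = ∑ m ∈ Q.support, Polynomial.C (Q.coeff m) *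
      m.prod fun i k => (Polynomial.C (b i) * Polynomial.X + Polynomial.C (a i)) ^ k := by
  conv_lhs => rw [restrictLine, Q.as_sum, map_sum]
  simp only [aeval_monomial, Polynomial.algebraMap_eq]

variable {Q : MvPolynomial σ R} {d : ℕ}

theorem IsHomogeneous.natDegree_restrictLine_le (hQ : Q.IsHomogeneous d) (a b : σ → R) :
    (Q.restrictLine a b).natDegree ≤ d := by
  rw [restrictLine_eq_sum]
  refine Polynomial.natDegree_sum_le_of_forall_le _ _ fun m hm =>
    (Polynomial.natDegree_C_mul_le _ _).trans ?_
  exact hQ.degree_eq_sum_deg_support hm ▸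
    Polynomial.natDegree_finsuppProd_pow_le (fun _ => Polynomial.natDegree_linear_le) m

theorem IsHomogeneous.coeff_restrictLine (hQ : Q.IsHomogeneous d) (a b : σ → R) :
    (Q.restrictLine a b).coeff d = eval b Q := by
  rw [restrictLine_eq_sum, Polynomial.finsetSum_coeff, eval_eq]
  refine sum_congr rfl fun m hm => ?_
  rw [Polynomial.coeff_C_mul, hQ.degree_eq_sum_deg_support hm,
    Polynomial.coeff_finsuppProd_pow_degree fun _ => Polynomial.natDegree_linear_le]
  simp [Finsupp.prod]

end RestrictLine

theorem eval_map_intCastRingHom {σ R : Type*} [CommRing R] (Q : MvPolynomial σ ℤ) (x : σ → ℤ) :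
    eval (fun i => (x i : R)) (map (Int.castRingHom R) Q) = ((eval x Q : ℤ) : R) := by
  rw [eval_map, ← eval₂_id, ← eq_intCast (Int.castRingHom R), eval₂_comp_left, RingHom.comp_id]
  rfl

section ZerosModPrimePower

variable {σ : Type*} {Q : MvPolynomial σ ℤ} {d : ℕ} {p : ℕ} {b : σ → ℤ} {v e s : ℕ}

theorem IsHomogeneous.card_zeros_on_line_le (hQ : Q.IsHomogeneous d) (hp : p.Prime)
    (hb : ¬ (p : ℤ) ^ (v + 1) ∣ eval b Q) (hvse : v + s * d < e + d) (hse : s ≤ e)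
    (a : σ → ZMod (p ^ e)) :
    Nat.card {t : ZMod (p ^ e) //
        eval (a + t • fun i => (b i : ZMod (p ^ e))) (map (Int.castRingHom _) Q) = 0}
      ≤ d * p ^ (e - s) := by
  classical
  have : NeZero (p ^ e) := ⟨pow_ne_zero e hp.ne_zero⟩
  have : NeZero (p ^ s) := ⟨pow_ne_zero s hp.ne_zero⟩
  obtain ⟨a, rfl⟩ := ZMod.intCast_surjective.comp_left a
  set F := Q.restrictLine a b
  have hFcoeff : F.coeff d = eval b Q := hQ.coeff_restrictLine a b
  have hFdeg : F.natDegree = d := Polynomial.natDegree_eq_of_le_of_coeff_ne_zero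
    (hQ.natDegree_restrictLine_le a b) (hFcoeff ▸ fun h => hb (h ▸ dvd_zero _))
  obtain ⟨T, hTcard, hT⟩ := Polynomial.exists_cover_of_pow_dvd_eval
    (Nat.prime_iff_prime_int.mp hp) (by rwa [Polynomial.leadingCoeff, hFdeg, hFcoeff])
    (hFdeg ▸ hvse)
  have hdiv : p ^ s ∣ p ^ e := pow_dvd_pow p hse
  set T' : Finset (ZMod (p ^ s)) := T.image Int.cast
  have hcover (t : ZMod (p ^ e))
      (ht : eval (Int.cast ∘ a + t • fun i => (b i : ZMod (p ^ e)))
        (map (Int.castRingHom _) Q) = 0) :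
      ZMod.castHom hdiv (ZMod (p ^ s)) t ∈ T' := by
    obtain ⟨u, rfl⟩ := ZMod.intCast_surjective t
    have hF : (p : ℤ) ^ e ∣ F.eval u := by
      rw [eval_restrictLine, ← Nat.cast_pow, ← ZMod.intCast_zmod_eq_zero_iff_dvd, ← ht,
        ← eval_map_intCastRingHom]
      congr 2 with i
      simp
    obtain ⟨t₀, ht₀, hut₀⟩ := hT u hF
    rw [map_intCast]
    exact mem_image.mpr
      ⟨t₀, ht₀, (ZMod.intCast_eq_intCast_iff_dvd_sub _ _ _).mpr (by push_cast; exact hut₀)⟩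
  have hfiber : #{t | ZMod.castHom hdiv (ZMod (p ^ s)) t ∈ T'} = #T' * p ^ (e - s) := by
    refine Nat.eq_of_mul_eq_mul_right (pow_pos hp.pos s) ?_
    rw [ZMod.card_filter_castHom_mem_mul hdiv T', mul_assoc, ← pow_add, Nat.sub_add_cancel hse]
  refine (Finite.card_le_of_embedding (Subtype.impEmbedding _ _ hcover)).trans ?_
  rw [Nat.card_eq_fintype_card, Fintype.card_subtype, hfiber]
  exact Nat.mul_le_mul_right _ (card_image_le.trans (hFdeg ▸ hTcard))

theorem IsHomogeneous.card_zeros_mul_le [Fintype σ] (hQ : Q.IsHomogeneous d) (hp : p.Prime)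
    (hb : ¬ (p : ℤ) ^ (v + 1) ∣ eval b Q) (hvse : v + s * d < e + d) (hse : s ≤ e) :
    Nat.card {x : σ → ZMod (p ^ e) // eval x (map (Int.castRingHom _) Q) = 0} * p ^ s
      ≤ d * p ^ (e * Fintype.card σ) := by
  classical
  have : NeZero (p ^ e) := ⟨pow_ne_zero e hp.ne_zero⟩
  have hsum := Fintype.sum_card_subtype_add_eq
    (fun x : σ → ZMod (p ^ e) => eval x (map (Int.castRingHom _) Q) = 0)
    (fun t : ZMod (p ^ e) => t • fun i => (b i : ZMod (p ^ e)))
  refine Nat.le_of_mul_le_mul_left ?_ (pow_pos hp.pos e)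
  calc p ^ e * (Nat.card {x : σ → ZMod (p ^ e) // eval x (map (Int.castRingHom _) Q) = 0} * p ^ s)
      = (∑ a, Nat.card {t : ZMod (p ^ e) //
          eval (a + t • fun i => (b i : ZMod (p ^ e))) (map (Int.castRingHom _) Q) = 0}) *
          p ^ s := by
        rw [hsum, ZMod.card, mul_assoc]
    _ ≤ (∑ _a : σ → ZMod (p ^ e), d * p ^ (e - s)) * p ^ s :=
        Nat.mul_le_mul_right _ (sum_le_sum fun a _ => by
          exact hQ.card_zeros_on_line_le hp hb hvse hse a)
    _ = p ^ e * (d * p ^ (e * Fintype.card σ)) := by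
        rw [sum_const, card_univ, Fintype.card_fun, ZMod.card, smul_eq_mul, ← pow_mul,
          mul_assoc, mul_assoc, ← pow_add, Nat.sub_add_cancel hse]
        ring

theorem IsHomogeneous.exists_card_zeros_mul_pow_le [Fintype σ] (hQ : Q.IsHomogeneous d)
    (hd : 0 < d) (hp : p.Prime) (hb : eval b Q ≠ 0) (e : ℕ) :
    ∃ s : ℕ, e ≤ d * (padicValInt p (eval b Q) + s) ∧
      Nat.card {x : σ → ZMod (p ^ e) // eval x (map (Int.castRingHom _) Q) = 0} * p ^ s
        ≤ d * p ^ (e * Fintype.card σ) := by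
  have : NeZero (p ^ e) := ⟨pow_ne_zero e hp.ne_zero⟩
  set v := padicValInt p (eval b Q)
  rcases le_or_gt e v with hev | hve
  · refine ⟨0, by nlinarith, ?_⟩
    rw [pow_zero, mul_one]
    calc _ ≤ Nat.card (σ → ZMod (p ^ e)) := Finite.card_subtype_le _
      _ = p ^ (e * Fintype.card σ) := by
        rw [Nat.card_fun, Nat.card_zmod, Nat.card_eq_fintype_card, pow_mul]
      _ ≤ d * p ^ (e * Fintype.card σ) := Nat.le_mul_of_pos_left _ hd
  · obtain ⟨s, hes, hvse, hse⟩ := Nat.exists_le_mul_add_and_add_mul_lt hd hve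
    refine ⟨s, hes, hQ.card_zeros_mul_le (b := b) hp ?_ hvse hse⟩
    rw [padicValInt_dvd_iff_of_ne_one hp.ne_one]
    omega

end ZerosModPrimePower

end MvPolynomial

theorem div_pow_le_of_mul_pow_le {p c d k s v : ℕ} {A x : ℝ} (hp : 1 < p)
    (hc : c * p ^ s ≤ d * p ^ k) (hA : (p : ℝ) ^ v ≤ A) (hx : x ≤ v + s) :
    (c : ℝ) / p ^ k ≤ d * A * (p : ℝ) ^ (-x) := by
  have hp0 : (0 : ℝ) < p := by positivity
  have hp1 : (1 : ℝ) ≤ p := by exact_mod_cast hp.le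
  calc (c : ℝ) / p ^ k ≤ d * (p : ℝ) ^ (-(s : ℝ)) := by
        rw [Real.rpow_neg hp0.le, Real.rpow_natCast, div_le_iff₀ (by positivity), mul_assoc,
          inv_mul_eq_div, mul_div_assoc', le_div_iff₀ (by positivity)]
        exact_mod_cast hc
    _ ≤ d * ((p : ℝ) ^ (v : ℝ) * (p : ℝ) ^ (-x)) := by
        rw [← Real.rpow_add hp0]
        gcongr
        linarith
    _ ≤ d * A * (p : ℝ) ^ (-x) := by
        rw [Real.rpow_natCast, ← mul_assoc]
        gcongr

theorem igusa_type_density_bound (n d : ℕ) (hd : 1 ≤ d) (Q : MvPolynomial (Fin n) ℤ)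
    (hhom : Q.IsHomogeneous d)
    (hnz : ∀ p : ℕ, p.Prime → MvPolynomial.map (Int.castRingHom (ZMod p)) Q ≠ 0) :
    ∃ C : ℝ, ∀ p e : ℕ, p.Prime → 1 ≤ e →
      (Nat.card {x : Fin n → ZMod (p ^ e) //
          MvPolynomial.eval x (MvPolynomial.map (Int.castRingHom (ZMod (p ^ e))) Q) = 0} : ℝ)
          / (p : ℝ) ^ (e * n)
        ≤ C * (p : ℝ) ^ (-(e : ℝ) / d) := by
  obtain ⟨b, hb⟩ : ∃ b, MvPolynomial.eval b Q ≠ 0 := by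
    by_contra! h
    have hQ : Q = 0 := MvPolynomial.funext fun x => by simpa using h x
    exact hnz 2 Nat.prime_two (by rw [hQ, map_zero])
  refine ⟨d * |(MvPolynomial.eval b Q : ℝ)|, fun p e hp _ => ?_⟩
  obtain ⟨s, hes, hcount⟩ := hhom.exists_card_zeros_mul_pow_le hd hp hb e
  rw [neg_div]
  refine div_pow_le_of_mul_pow_le (v := padicValInt p (MvPolynomial.eval b Q)) hp.one_lt
    (by simpa using hcount) ?_ ?_
  · exact_mod_cast Int.le_abs_of_dvd hb (padicValInt_dvd _)
  · rw [div_le_iff₀ (by positivity)]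
    exact_mod_cast (by linarith : e ≤ (padicValInt p (MvPolynomial.eval b Q) + s) * d)
end
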